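/- arXiv:2308.14773 — 4 statements merged into one kernel-verified Lean document; each statement's English description precedes it below -/
import Mathlib

section
/- Let κ be a regular uncountable cardinal and λ, π be cardinals with κ ≤ λ ≤ π. Then the following are equivalent: (i) 𝒜_{κ,λ}(κ, π) holds; (ii) there is some X ∈ I_{κ,π}⁺ such that I_{κ,λ} and I_{κ,π}|X are isomorphic. -/
open Cardinal Set

namespace Paper

universe u v

/-- `J` is an ideal on the set `X`: a nonempty collection of subsets of `X` not containing
`X` itself, closed under subsets and pairwise unions. -/
def IsIdealOn {α : Type u} (X : Set α) (J : Set (Set α)) : Prop :=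
  J.Nonempty ∧ (∀ A ∈ J, A ⊆ X) ∧ X ∉ J ∧
    (∀ A ∈ J, ∀ B, B ⊆ A → B ∈ J) ∧ (∀ A ∈ J, ∀ B ∈ J, A ∪ B ∈ J)

/-- `J* = {A ⊆ X : X \ A ∈ J}`, the dual filter of the ideal `J` on `X`. -/
def dualOn {α : Type u} (X : Set α) (J : Set (Set α)) : Set (Set α) :=
  {A | A ⊆ X ∧ X \ A ∈ J}

/-- `J⁺ = P(X) \ J`. -/
def plusOn {α : Type u} (X : Set α) (J : Set (Set α)) : Set (Set α) :=
  {A | A ⊆ X ∧ A ∉ J}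

/-- `J | A = {B ⊆ X : B ∩ A ∈ J}`. -/
def restrictOn {α : Type u} (X : Set α) (J : Set (Set α)) (A : Set α) : Set (Set α) :=
  {B | B ⊆ X ∧ B ∩ A ∈ J}

/-- The ideals `K1` on `X1` and `K2` on `X2` are isomorphic: there are `W1 ∈ K1*`, `W2 ∈ K2*`
and a bijection `k : W1 → W2` with `K1* ∩ P(W1) = {D ⊆ W1 : k '' D ∈ K2*}`. -/
def IdealIso {α : Type u} {β : Type v} (X1 : Set α) (K1 : Set (Set α))
    (X2 : Set β) (K2 : Set (Set β)) : Prop :=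
  ∃ W1 ∈ dualOn X1 K1, ∃ W2 ∈ dualOn X2 K2, ∃ k : α → β,
    Set.BijOn k W1 W2 ∧ ∀ D ⊆ W1, (D ∈ dualOn X1 K1 ↔ k '' D ∈ dualOn X2 K2)

/-- The ideal `J` (on a set of ordinals) is `ρ`-complete: the union of fewer than `ρ`
members of `J` belongs to `J`. -/
def IsComplete (ρ : Cardinal.{0}) (J : Set (Set Ordinal)) : Prop :=
  ∀ Q : Set (Set Ordinal), Q ⊆ J → #Q < Cardinal.lift.{1} ρ → ⋃₀ Q ∈ J

/-- `P_χ(λ)`, realized as the collection of subsets of the ordinal interval `[0, ord λ)`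
of cardinality `< χ`. -/
def Pk (χ lam : Cardinal.{0}) : Set (Set Ordinal) :=
  {a | (∀ x ∈ a, x < lam.ord) ∧ #a < Cardinal.lift.{1} χ}

/-- `S` is cofinal in `(P_χ(λ), ⊆)`. -/
def IsCofinalIn (S : Set (Set Ordinal)) (χ lam : Cardinal.{0}) : Prop :=
  ∀ a ∈ Pk χ lam, ∃ b ∈ S, a ⊆ b

/-- `u(κ, λ)`: the least cardinality of a cofinal subset of `(P_κ(λ), ⊆)`. -/
noncomputable def uu (κ lam : Cardinal.{0}) : Cardinal.{0} :=
  sInf {c : Cardinal.{0} | ∃ S ⊆ Pk κ lam, IsCofinalIn S κ lam ∧ #S = Cardinal.lift.{1} c}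

/-- A `(τ,λ,π)`-sequence: an injective sequence `⟨y_β : β < π⟩` of elements of `P_τ(λ)`
with `y_β = {β}` for every `β < λ`. -/
def IsTLPSeq (τ lam π : Cardinal.{0}) (y : Ordinal → Set Ordinal) : Prop :=
  (∀ β < π.ord, (∀ x ∈ y β, x < lam.ord) ∧ #(y β) < Cardinal.lift.{1} τ) ∧
  (∀ β < lam.ord, y β = {β}) ∧
  (∀ β < π.ord, ∀ γ < π.ord, y β = y γ → β = γ)

/-- `f_⃗y(a) = {β < π : y_β ⊆ a}`. -/
def fSeq (π : Cardinal.{0}) (y : Ordinal → Set Ordinal) (a : Set Ordinal) : Set Ordinal :=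
  {β | β < π.ord ∧ y β ⊆ a}

/-- An `𝒜_{κ,λ}(τ,π)`-sequence: a `(τ,λ,π)`-sequence with `|f_⃗y(a)| < κ` for all
`a ∈ P_κ(λ)`. -/
def ASeq (κ lam τ π : Cardinal.{0}) (y : Ordinal → Set Ordinal) : Prop :=
  IsTLPSeq τ lam π y ∧ ∀ a ∈ Pk κ lam, #(fSeq π y a) < Cardinal.lift.{1} κ

/-- `𝒜_{κ,λ}(τ,π)` asserts the existence of an `𝒜_{κ,λ}(τ,π)`-sequence. -/
def A (κ lam τ π : Cardinal.{0}) : Prop := ∃ y, ASeq κ lam τ π y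

/-- The noncofinal ideal `I_{κ,σ}` on `P_κ(σ)`. -/
def Icof (κ σ : Cardinal.{0}) : Set (Set (Set Ordinal)) :=
  {A | A ⊆ Pk κ σ ∧ ¬ IsCofinalIn A κ σ}

/-- `A` is `μ`-closed: the union of any `⊂`-increasing `μ`-sequence from `A` is in `A`. -/
def MuClosed (μ : Cardinal.{0}) (A : Set (Set Ordinal)) : Prop :=
  ∀ s : Ordinal → Set Ordinal,
    (∀ i < μ.ord, s i ∈ A) →
    (∀ i j, i < j → j < μ.ord → s i ⊂ s j) →
    (⋃ i ∈ Set.Iio μ.ord, s i) ∈ A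

/-- A `μ`-club of `P_κ(σ)`: a `μ`-closed cofinal subset of `P_κ(σ)`. -/
def MuClub (μ κ σ : Cardinal.{0}) (C : Set (Set Ordinal)) : Prop :=
  C ⊆ Pk κ σ ∧ MuClosed μ C ∧ IsCofinalIn C κ σ

/-- The ideal `Nμ-S_{κ,σ}` of all subsets of `P_κ(σ)` disjoint from some `μ`-club. -/
def NmuS (μ κ σ : Cardinal.{0}) : Set (Set (Set Ordinal)) :=
  {B | B ⊆ Pk κ σ ∧ ∃ C, MuClub μ κ σ C ∧ B ∩ C = ∅}

/-- `f <_I g` : `{a ∈ A : f(a) ≥ g(a)} ∈ I`. -/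
def ltI (A : Set Cardinal.{0}) (I : Set (Set Cardinal.{0}))
    (f g : Cardinal.{0} → Ordinal) : Prop :=
  {a | a ∈ A ∧ g a ≤ f a} ∈ I

/-- `f` is a member of `∏_{a ∈ A} a`. -/
def inProd (A : Set Cardinal.{0}) (f : Cardinal.{0} → Ordinal) : Prop :=
  ∀ a ∈ A, f a < a.ord

/-- `tcf (∏ A / I) = π`: there is a `<_I`-increasing sequence of length `π`
cofinal in `(∏ A, <_I)`. -/
def IsTcf (A : Set Cardinal.{0}) (I : Set (Set Cardinal.{0})) (π : Cardinal.{0}) : Prop :=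
  ∃ F : Ordinal → Cardinal.{0} → Ordinal,
    (∀ α < π.ord, inProd A (F α)) ∧
    (∀ α β, α < β → β < π.ord → ltI A I (F α) (F β)) ∧
    (∀ g, inProd A g → ∃ α < π.ord, ltI A I g (F α))

/-- The set of cardinals `π` with `π = tcf (∏ A / I)` for some set `A` of regular cardinals
with `sup A = θ`, `|A| = cf θ < min A`, and some ideal `I` on `A` containing all the sets
`A ∩ a` for `a ∈ A`. -/
def ppSet (θ : Cardinal.{0}) : Set Cardinal.{0} :=
  {π | ∃ (A : Set Cardinal.{0}) (I : Set (Set Cardinal.{0})),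
    A.Nonempty ∧ (∀ a ∈ A, a.IsRegular) ∧ (∀ a ∈ A, a < θ) ∧ sSup A = θ ∧
    #A = Cardinal.lift.{1} θ.ord.cof ∧ (∀ a ∈ A, θ.ord.cof < a) ∧
    IsIdealOn A I ∧ (∀ a ∈ A, {b | b ∈ A ∧ b < a} ∈ I) ∧ IsTcf A I π}

/-- `pp θ`, the supremum of the possible cofinalities. -/
noncomputable def pp (θ : Cardinal.{0}) : Cardinal.{0} := sSup (ppSet θ)

/-- `c` is a limit cardinal: `c` is infinite and closed under cardinal successor. -/
def IsLimitCard (c : Cardinal.{0}) : Prop := ℵ₀ ≤ c ∧ ∀ d < c, Order.succ d < c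

/-- `ρ(τ)`: the largest limit cardinal `≤ τ`. -/
noncomputable def rho (τ : Cardinal.{0}) : Cardinal.{0} :=
  sSup {c | c ≤ τ ∧ IsLimitCard c}

/-- The index `β` such that `κ = ℵ_β` (for `κ` infinite). -/
noncomputable def alephIdx (κ : Cardinal.{0}) : Ordinal :=
  sInf {β | κ ≤ Cardinal.aleph β}

/-- `κ^{+α}`, the `α`-th iterated successor of `κ`: `ℵ_{β+α}` where `κ = ℵ_β`. -/
noncomputable def iterSucc (κ : Cardinal.{0}) (α : Ordinal) : Cardinal.{0} :=
  Cardinal.aleph (alephIdx κ + α)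

/-- `θ` is a fixed point of the aleph function: `θ = ℵ_θ`. -/
def IsAlephFixedPoint (θ : Cardinal.{0}) : Prop := Cardinal.aleph θ.ord = θ

/-- `θ` is a singular cardinal: infinite with `cf θ < θ`. -/
def IsSingular (θ : Cardinal.{0}) : Prop := ℵ₀ ≤ θ ∧ θ.ord.cof < θ

/-- `κ` is weakly inaccessible: a regular uncountable limit cardinal. -/
def WeaklyInaccessible (κ : Cardinal.{0}) : Prop := ℵ₀ < κ ∧ κ.IsRegular ∧ IsLimitCard κ

/-- `κ` is a successor cardinal. -/
def IsSuccCard (κ : Cardinal.{0}) : Prop := ∃ ν, κ = Order.succ ν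

/-- An `ℱ^I_{κ,λ}(σ⁺,π)`-sequence: a `(σ⁺,λ,π)`-sequence `⟨y_β : β < π⟩` together with
functions `f_β : σ → λ` (for `λ ≤ β < π`) with `y_β = ran f_β`, such that every
`e ⊆ π \ λ` of cardinality `κ` has a subset `b` of cardinality `κ` and a `g : b → I` with
`f_α(i) ≠ f_β(i)` whenever `α < β` are in `b` and `i ∈ σ \ (g(α) ∪ g(β))`. -/
def FSeq (κ lam π σ : Cardinal.{0}) (I : Set (Set Ordinal))
    (y : Ordinal → Set Ordinal) : Prop :=
  IsTLPSeq (Order.succ σ) lam π y ∧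
  ∃ f : Ordinal → Ordinal → Ordinal,
    (∀ β, lam.ord ≤ β → β < π.ord →
      (∀ i < σ.ord, f β i < lam.ord) ∧ y β = f β '' Set.Iio σ.ord) ∧
    ∀ e : Set Ordinal, e ⊆ {β | lam.ord ≤ β ∧ β < π.ord} → #e = Cardinal.lift.{1} κ →
      ∃ b ⊆ e, #b = Cardinal.lift.{1} κ ∧ ∃ g : Ordinal → Set Ordinal,
        (∀ α ∈ b, g α ∈ I) ∧
        ∀ α ∈ b, ∀ β ∈ b, α < β →
          ∀ i < σ.ord, i ∉ g α → i ∉ g β → f α i ≠ f β i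

end Paper

open Paper

/-!
If `y⃗` is an `𝒜_{κ,λ}(κ,π)`-sequence, `f_y⃗` maps `P_κ(λ)` into `P_κ(π)` with cofinal image `X`,
and `f_y⃗(a) ∩ λ = a` gives `f_y⃗(a) ⊆ f_y⃗(b) ↔ a ⊆ b`; such a map carries `I_{κ,λ}` onto
`I_{κ,π} | X`.

Conversely, let `k` witness `I_{κ,λ} ≅ I_{κ,π} | X`. For `β < π` the members of `X` containing `β`
form a filter set of `I_{κ,π} | X`, so the `a` with `β ∈ k(a)` include every `a ∈ P_κ(λ)` above
some `z_β`. For `λ ≤ β < π` let `y_β` code the pair `(z_β, t_β)` through a pairing function on `λ`,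
where the tag `t_β < λ` separates `β` from the other ordinals with the same `z_β`: there are fewer
than `κ` of them, as they all lie in `k(z_β)`. If `y_β ⊆ a` then `z_β ⊆ a'`, the set of first
coordinates of the codes in `a`, so `f_y⃗(a) ⊆ a ∪ k(a')` has size `< κ`.
-/

namespace Paper

section Pk

variable {χ σ : Cardinal.{0}} {a b : Set Ordinal}

lemma empty_mem_Pk (hχ : χ ≠ 0) : (∅ : Set Ordinal) ∈ Pk χ σ :=
  ⟨by simp, by simpa [pos_iff_ne_zero] using hχ⟩

lemma union_mem_Pk (hχ : ℵ₀ ≤ χ) (ha : a ∈ Pk χ σ) (hb : b ∈ Pk χ σ) : a ∪ b ∈ Pk χ σ :=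
  ⟨fun x hx => hx.elim (ha.1 x) (hb.1 x),
    (mk_union_le a b).trans_lt (add_lt_of_lt (aleph0_le_lift.2 hχ) ha.2 hb.2)⟩

lemma insert_mem_Pk (hχ : ℵ₀ ≤ χ) {x : Ordinal} (hx : x < σ.ord) (ha : a ∈ Pk χ σ) :
    insert x a ∈ Pk χ σ := by
  refine insert_eq x a ▸ union_mem_Pk hχ ⟨by simpa using hx, ?_⟩ ha
  rw [mk_singleton]
  exact one_lt_aleph0.trans_le (aleph0_le_lift.2 hχ)

lemma biUnion_mem_Pk (hχ : χ.IsRegular) {Y : Ordinal → Set Ordinal} (hb : #b < lift.{1} χ)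
    (hY : ∀ β ∈ b, Y β ∈ Pk χ σ) : (⋃ β ∈ b, Y β) ∈ Pk χ σ := by
  refine ⟨fun x hx => ?_, ?_⟩
  · obtain ⟨β, hβ, hxβ⟩ := mem_iUnion₂.1 hx
    exact (hY β hβ).1 x hxβ
  · exact (card_biUnion_lt_iff_forall_of_isRegular hχ.lift hb).2 fun β hβ => (hY β hβ).2

end Pk

section Icof

variable {χ σ : Cardinal.{0}}

lemma not_isCofinalIn_iff {S : Set (Set Ordinal)} :
    ¬ IsCofinalIn S χ σ ↔ ∃ a ∈ Pk χ σ, ∀ b ∈ S, ¬ a ⊆ b := by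
  simp only [IsCofinalIn, not_forall, not_exists, not_and, exists_prop]

lemma mem_plusOn_Icof_iff {X : Set (Set Ordinal)} :
    X ∈ plusOn (Pk χ σ) (Icof χ σ) ↔ X ⊆ Pk χ σ ∧ IsCofinalIn X χ σ := by
  simp only [plusOn, Icof, mem_ofPred_eq, not_and, not_not]
  exact ⟨fun h => ⟨h.1, h.2 h.1⟩, fun h => ⟨h.1, fun _ => h.2⟩⟩

lemma mem_dualOn_Icof_iff {A : Set (Set Ordinal)} :
    A ∈ dualOn (Pk χ σ) (Icof χ σ) ↔
      A ⊆ Pk χ σ ∧ ∃ c ∈ Pk χ σ, ∀ b ∈ Pk χ σ, c ⊆ b → b ∈ A := by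
  simp only [dualOn, Icof, mem_ofPred_eq, sdiff_subset, true_and, not_isCofinalIn_iff]
  refine and_congr_right fun _ => exists_congr fun c => and_congr_right fun _ => ?_
  exact ⟨fun h b hb hcb => by_contra fun hbA => h b ⟨hb, hbA⟩ hcb,
    fun h b hb hcb => hb.2 (h b hb.1 hcb)⟩

lemma mem_dualOn_restrictOn_Icof_iff {X A : Set (Set Ordinal)} :
    A ∈ dualOn (Pk χ σ) (restrictOn (Pk χ σ) (Icof χ σ) X) ↔
      A ⊆ Pk χ σ ∧ ∃ c ∈ Pk χ σ, ∀ b ∈ X, b ∈ Pk χ σ → c ⊆ b → b ∈ A := by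
  have hsub : (Pk χ σ \ A) ∩ X ⊆ Pk χ σ := fun b hb => hb.1.1
  simp only [dualOn, restrictOn, Icof, mem_ofPred_eq, sdiff_subset, true_and, hsub,
    not_isCofinalIn_iff]
  refine and_congr_right fun _ => exists_congr fun c => and_congr_right fun _ => ?_
  exact ⟨fun h b hbX hb hcb => by_contra fun hbA => h b ⟨⟨hb, hbA⟩, hbX⟩ hcb,
    fun h b hb hcb => hb.1.2 (h b hb.2 hb.1.1 hcb)⟩

end Icof

section OrderEmbedding

variable {κ lam π : Cardinal.{0}} {k : Set Ordinal → Set Ordinal}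

lemma image_mem_plusOn_Icof (hk : MapsTo k (Pk κ lam) (Pk κ π))
    (hcof : ∀ b ∈ Pk κ π, ∃ a ∈ Pk κ lam, b ⊆ k a) :
    k '' Pk κ lam ∈ plusOn (Pk κ π) (Icof κ π) := by
  refine mem_plusOn_Icof_iff.2 ⟨image_subset_iff.2 hk, fun b hb => ?_⟩
  obtain ⟨a, ha, hba⟩ := hcof b hb
  exact ⟨k a, mem_image_of_mem k ha, hba⟩

lemma idealIso_restrictOn_image (hκ : κ ≠ 0) (hk : MapsTo k (Pk κ lam) (Pk κ π))
    (hle : ∀ a ∈ Pk κ lam, ∀ b ∈ Pk κ lam, k a ⊆ k b ↔ a ⊆ b)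
    (hcof : ∀ b ∈ Pk κ π, ∃ a ∈ Pk κ lam, b ⊆ k a) :
    IdealIso (Pk κ lam) (Icof κ lam) (Pk κ π)
      (restrictOn (Pk κ π) (Icof κ π) (k '' Pk κ lam)) := by
  have hinj : InjOn k (Pk κ lam) := fun a ha b hb hab =>
    ((hle a ha b hb).1 hab.le).antisymm ((hle b hb a ha).1 hab.ge)
  refine ⟨Pk κ lam, mem_dualOn_Icof_iff.2 ⟨subset_rfl, ∅, empty_mem_Pk hκ, fun b hb _ => hb⟩,
    k '' Pk κ lam, mem_dualOn_restrictOn_Icof_iff.2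
      ⟨image_subset_iff.2 hk, ∅, empty_mem_Pk hκ, fun b hb _ _ => hb⟩,
    k, hinj.bijOn_image, fun D hD => ?_⟩
  rw [mem_dualOn_Icof_iff, mem_dualOn_restrictOn_Icof_iff]
  constructor
  · rintro ⟨-, c, hc, hcD⟩
    refine ⟨image_subset_iff.2 fun a ha => hk (hD ha), k c, hk hc, ?_⟩
    rintro _ ⟨a, ha, rfl⟩ - hca
    exact mem_image_of_mem k (hcD a ha ((hle c hc a ha).1 hca))
  · rintro ⟨-, c, hc, hcD⟩
    obtain ⟨a₀, ha₀, hca₀⟩ := hcof c hc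
    refine ⟨hD, a₀, ha₀, fun b hb hab => hinj.mem_of_mem_image hD hb ?_⟩
    exact hcD (k b) (mem_image_of_mem k hb) (hk hb) (hca₀.trans ((hle a₀ ha₀ b hb).2 hab))

end OrderEmbedding

section fSeq

variable {κ lam π τ : Cardinal.{0}} {y : Ordinal → Set Ordinal} {a b : Set Ordinal}

lemma fSeq_mono : Monotone (fSeq π y) :=
  fun _ _ hab _ hβ => ⟨hβ.1, hβ.2.trans hab⟩

lemma mem_fSeq_iff_of_lt (hy : IsTLPSeq τ lam π y) (hlp : lam ≤ π) {β : Ordinal}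
    (hβ : β < lam.ord) : β ∈ fSeq π y a ↔ β ∈ a := by
  simp [fSeq, hy.2.1 β hβ, hβ.trans_le (ord_le_ord.2 hlp)]

lemma fSeq_subset_fSeq_iff (hy : IsTLPSeq τ lam π y) (hlp : lam ≤ π)
    (ha : ∀ x ∈ a, x < lam.ord) : fSeq π y a ⊆ fSeq π y b ↔ a ⊆ b :=
  ⟨fun h x hx => (mem_fSeq_iff_of_lt hy hlp (ha x hx)).1
    (h ((mem_fSeq_iff_of_lt hy hlp (ha x hx)).2 hx)), fun h => fSeq_mono h⟩

lemma exists_subset_fSeq (hκ : κ.IsRegular) (hy : IsTLPSeq κ lam π y) (hb : b ∈ Pk κ π) :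
    ∃ a ∈ Pk κ lam, b ⊆ fSeq π y a :=
  ⟨⋃ β ∈ b, y β, biUnion_mem_Pk hκ hb.2 fun β hβ => hy.1 β (hb.1 β hβ),
    fun β hβ => ⟨hb.1 β hβ, subset_biUnion_of_mem hβ⟩⟩

lemma exists_idealIso_of_A (hκ : κ.IsRegular) (hlp : lam ≤ π) (hA : A κ lam κ π) :
    ∃ X ∈ plusOn (Pk κ π) (Icof κ π),
      IdealIso (Pk κ lam) (Icof κ lam) (Pk κ π) (restrictOn (Pk κ π) (Icof κ π) X) := by
  obtain ⟨y, hy, hsmall⟩ := hA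
  have hmaps : MapsTo (fSeq π y) (Pk κ lam) (Pk κ π) :=
    fun a ha => ⟨fun _ hβ => hβ.1, hsmall a ha⟩
  have hcof := fun b (hb : b ∈ Pk κ π) => exists_subset_fSeq hκ hy hb
  exact ⟨_, image_mem_plusOn_Icof hmaps hcof, idealIso_restrictOn_image hκ.ne_zero hmaps
    (fun a ha _ _ => fSeq_subset_fSeq_iff hy hlp ha.1) hcof⟩

end fSeq

section Coding

universe u v

lemma exists_mapsTo_injOn_of_mk_le {α β : Type u} [Nonempty β] {s : Set α} {t : Set β}
    (h : #s ≤ #t) : ∃ f : α → β, MapsTo f s t ∧ InjOn f s := by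
  classical
  obtain ⟨e⟩ := h
  refine ⟨fun x => if hx : x ∈ s then e ⟨x, hx⟩ else Classical.arbitrary β,
    fun x hx => by simp [hx], fun x hx x' hx' hxx' => ?_⟩
  simp only [hx, hx', dite_true] at hxx'
  exact congrArg Subtype.val (e.injective (Subtype.ext hxx'))

lemma exists_tag {α β : Type u} {γ : Type v} [Nonempty β] {s : Set α} {t : Set β} (Z : α → γ)
    (h : ∀ z, #(s ∩ Z ⁻¹' {z} : Set α) ≤ #t) :
    ∃ tag : α → β, MapsTo tag s t ∧ InjOn (fun x => (Z x, tag x)) s := by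
  choose g hgt hginj using fun z => exists_mapsTo_injOn_of_mk_le (h z)
  refine ⟨fun x => g (Z x) x, fun x hx => hgt (Z x) ⟨hx, rfl⟩, fun x hx x' hx' hxx' => ?_⟩
  obtain ⟨hZ, htag⟩ := Prod.mk.inj hxx'
  dsimp only at hZ htag
  rw [hZ] at htag
  exact hginj (Z x') ⟨hx, hZ⟩ ⟨hx', rfl⟩ htag

lemma exists_pairing {lam : Cardinal.{0}} (hlam : ℵ₀ ≤ lam) :
    ∃ E : Ordinal × Ordinal → Ordinal, MapsTo E (Iio lam.ord ×ˢ Iio lam.ord) (Iio lam.ord) ∧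
      InjOn E (Iio lam.ord ×ˢ Iio lam.ord) := by
  refine exists_mapsTo_injOn_of_mk_le (le_of_eq ?_)
  rw [mk_setProd, mk_Iio_ordinal, card_ord]
  exact mul_eq_self (aleph0_le_lift.2 hlam)

lemma image_pair_eq_image_pair_iff {α β γ : Type*} {s : Set α} {t : Set β} {E : α × β → γ}
    (hE : InjOn E (s ×ˢ t)) {z z' : Set α} {j j' : β} (hz : z ⊆ s) (hz' : z' ⊆ s)
    (hj : j ∈ t) (hj' : j' ∈ t) (hne : z.Nonempty) :
    (fun x => E (x, j)) '' z = (fun x => E (x, j')) '' z' ↔ z = z' ∧ j = j' := by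
  refine ⟨fun h => ?_, fun h => h.1 ▸ h.2 ▸ rfl⟩
  obtain ⟨x, hx⟩ := hne
  obtain ⟨x', hx', hxx'⟩ := h ▸ mem_image_of_mem (fun x => E (x, j)) hx
  obtain rfl : j' = j := (Prod.mk.inj (hE ⟨hz' hx', hj'⟩ ⟨hz hx, hj⟩ hxx')).2
  have hinj : InjOn (fun x => E (x, j')) s :=
    fun x hx x' hx' h => (Prod.mk.inj (hE ⟨hx, hj⟩ ⟨hx', hj⟩ h)).1
  exact ⟨(hinj.image_eq_image_iff hz hz').1 h, rfl⟩

lemma mk_decode_le {o : Ordinal} {E : Ordinal × Ordinal → Ordinal}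
    (hE : InjOn E (Iio o ×ˢ Iio o)) (a : Set Ordinal) :
    #(Prod.fst '' (Iio o ×ˢ Iio o ∩ E ⁻¹' a) : Set Ordinal) ≤ #a :=
  calc _ ≤ #(Iio o ×ˢ Iio o ∩ E ⁻¹' a : Set (Ordinal × Ordinal)) := mk_image_le
    _ = #(E '' (Iio o ×ˢ Iio o ∩ E ⁻¹' a)) :=
      (mk_image_eq_of_injOn _ _ (hE.mono inter_subset_left)).symm
    _ ≤ #a := mk_le_mk_of_subset (image_subset_iff.2 inter_subset_right)

end Coding

noncomputable def codedSeq (lam : Cardinal.{0}) (E : Ordinal × Ordinal → Ordinal)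
    (Z : Ordinal → Set Ordinal) (tag : Ordinal → Ordinal) (β : Ordinal) : Set Ordinal :=
  if β < lam.ord then {β} else (fun x => E (x, tag β)) '' Z β

section codedSeq

variable {κ lam π : Cardinal.{0}} {E : Ordinal × Ordinal → Ordinal}
  {Z : Ordinal → Set Ordinal} {tag : Ordinal → Ordinal}

lemma codedSeq_of_lt {β : Ordinal} (hβ : β < lam.ord) : codedSeq lam E Z tag β = {β} :=
  if_pos hβ

lemma codedSeq_of_le {β : Ordinal} (hβ : lam.ord ≤ β) :
    codedSeq lam E Z tag β = (fun x => E (x, tag β)) '' Z β :=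
  if_neg hβ.not_gt

lemma isTLPSeq_codedSeq (hκ : ℵ₀ ≤ κ)
    (hEt : MapsTo E (Iio lam.ord ×ˢ Iio lam.ord) (Iio lam.ord))
    (hE : InjOn E (Iio lam.ord ×ˢ Iio lam.ord))
    (hZ : ∀ β ∈ Ico lam.ord π.ord, Z β ∈ Pk κ lam ∧ (Z β).Nontrivial)
    (htag : MapsTo tag (Ico lam.ord π.ord) (Iio lam.ord))
    (hinj : InjOn (fun β => (Z β, tag β)) (Ico lam.ord π.ord)) :
    IsTLPSeq κ lam π (codedSeq lam E Z tag) := by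
  have hEj : ∀ β ∈ Ico lam.ord π.ord, InjOn (fun x => E (x, tag β)) (Iio lam.ord) :=
    fun β hβ x hx x' hx' h => (Prod.mk.inj (hE ⟨hx, htag hβ⟩ ⟨hx', htag hβ⟩ h)).1
  have hnontriv : ∀ β ∈ Ico lam.ord π.ord, (codedSeq lam E Z tag β).Nontrivial :=
    fun β hβ => codedSeq_of_le hβ.1 ▸
      (hZ β hβ).2.image_of_injOn ((hEj β hβ).mono fun x hx => (hZ β hβ).1.1 x hx)
  refine ⟨fun β hβπ => ?_, fun β hβ => codedSeq_of_lt hβ, fun β hβπ γ hγπ hβγ => ?_⟩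
  · rcases lt_or_ge β lam.ord with hβ | hβ
    · rw [codedSeq_of_lt hβ, mk_singleton]
      exact ⟨by simpa using hβ, one_lt_aleph0.trans_le (aleph0_le_lift.2 hκ)⟩
    · obtain ⟨hZsub, hZcard⟩ := (hZ β ⟨hβ, hβπ⟩).1
      rw [codedSeq_of_le hβ]
      exact ⟨forall_mem_image.2 fun x hx => hEt ⟨hZsub x hx, htag ⟨hβ, hβπ⟩⟩,
        mk_image_le.trans_lt hZcard⟩
  · rcases lt_or_ge β lam.ord with hβ | hβ <;> rcases lt_or_ge γ lam.ord with hγ | hγ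
    · rwa [codedSeq_of_lt hβ, codedSeq_of_lt hγ, singleton_eq_singleton_iff] at hβγ
    · exact absurd (codedSeq_of_lt (E := E) (Z := Z) (tag := tag) hβ ▸ hβγ ▸
        hnontriv γ ⟨hγ, hγπ⟩) (not_nontrivial_singleton)
    · exact absurd (codedSeq_of_lt (E := E) (Z := Z) (tag := tag) hγ ▸ hβγ.symm ▸
        hnontriv β ⟨hβ, hβπ⟩) (not_nontrivial_singleton)
    · rw [codedSeq_of_le hβ, codedSeq_of_le hγ, image_pair_eq_image_pair_iff hE
        (hZ β ⟨hβ, hβπ⟩).1.1 (hZ γ ⟨hγ, hγπ⟩).1.1 (htag ⟨hβ, hβπ⟩) (htag ⟨hγ, hγπ⟩)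
        (hZ β ⟨hβ, hβπ⟩).2.nonempty] at hβγ
      exact hinj ⟨hβ, hβπ⟩ ⟨hγ, hγπ⟩ (Prod.ext hβγ.1 hβγ.2)

lemma fSeq_codedSeq_subset (hZ : ∀ β ∈ Ico lam.ord π.ord, Z β ⊆ Iio lam.ord)
    (htag : MapsTo tag (Ico lam.ord π.ord) (Iio lam.ord)) (a : Set Ordinal) :
    fSeq π (codedSeq lam E Z tag) a ⊆
      a ∪ {β ∈ Ico lam.ord π.ord | Z β ⊆ Prod.fst '' (Iio lam.ord ×ˢ Iio lam.ord ∩ E ⁻¹' a)} := by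
  rintro β ⟨hβπ, hβa⟩
  rcases lt_or_ge β lam.ord with hβ | hβ
  · exact Or.inl (hβa (codedSeq_of_lt hβ ▸ rfl))
  · rw [codedSeq_of_le hβ] at hβa
    exact Or.inr ⟨⟨hβ, hβπ⟩, fun x hx =>
      ⟨(x, tag β), ⟨⟨hZ β ⟨hβ, hβπ⟩ hx, htag ⟨hβ, hβπ⟩⟩, hβa (mem_image_of_mem _ hx)⟩, rfl⟩⟩

end codedSeq

theorem A_of_forall_exists_cone {κ lam π : Cardinal.{0}} (hκ : ℵ₀ ≤ κ) (hκlam : κ ≤ lam)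
    (k : Set Ordinal → Set Ordinal) (hk : ∀ a ∈ Pk κ lam, #(k a) < lift.{1} κ)
    (hcone : ∀ β ∈ Ico lam.ord π.ord, ∃ z ∈ Pk κ lam, ∀ a ∈ Pk κ lam, z ⊆ a → β ∈ k a) :
    A κ lam κ π := by
  have hlam : ℵ₀ ≤ lam := hκ.trans hκlam
  have hω : Ordinal.omega0 ≤ lam.ord := omega0_le_ord.2 hlam
  choose! Z₀ hZ₀ hZ₀k using hcone
  -- `0, 1 ∈ Z β` makes `y_β` differ from the singletons `y_γ = {γ}`, `γ < λ`
  set Z : Ordinal → Set Ordinal := fun β => insert 0 (insert 1 (Z₀ β))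
  have hZ : ∀ β ∈ Ico lam.ord π.ord, Z β ∈ Pk κ lam ∧ (Z β).Nontrivial := fun β hβ =>
    ⟨insert_mem_Pk hκ (Ordinal.omega0_pos.trans_le hω)
      (insert_mem_Pk hκ (Ordinal.one_lt_omega0.trans_le hω) (hZ₀ β hβ)),
      ⟨0, mem_insert _ _, 1, mem_insert_of_mem _ (mem_insert _ _), zero_ne_one⟩⟩
  have hZk : ∀ β ∈ Ico lam.ord π.ord, ∀ a ∈ Pk κ lam, Z β ⊆ a → β ∈ k a := fun β hβ a ha hZa =>
    hZ₀k β hβ a ha (((subset_insert _ _).trans (subset_insert _ _)).trans hZa)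
  have hfiber : ∀ z, #(Ico lam.ord π.ord ∩ Z ⁻¹' {z} : Set Ordinal) ≤ #(Iio lam.ord) := by
    intro z
    rcases eq_empty_or_nonempty (Ico lam.ord π.ord ∩ Z ⁻¹' {z}) with he | ⟨β, hβ, rfl⟩
    · simp [he]
    · calc _ ≤ #(k (Z β)) := mk_le_mk_of_subset fun γ hγ =>
            hZk γ hγ.1 (Z β) (hZ β hβ).1 hγ.2.subset
        _ ≤ #(Iio lam.ord) := by
          rw [mk_Iio_ordinal, card_ord]
          exact (hk _ (hZ β hβ).1).le.trans (lift_le.2 hκlam)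
  obtain ⟨tag, htag, hinj⟩ := exists_tag Z hfiber
  obtain ⟨E, hEt, hE⟩ := exists_pairing hlam
  refine ⟨codedSeq lam E Z tag, isTLPSeq_codedSeq hκ hEt hE hZ htag hinj, fun a ha => ?_⟩
  set a' := Prod.fst '' (Iio lam.ord ×ˢ Iio lam.ord ∩ E ⁻¹' a)
  have ha' : a' ∈ Pk κ lam :=
    ⟨forall_mem_image.2 fun p hp => hp.1.1, (mk_decode_le hE a).trans_lt ha.2⟩
  have hsub : fSeq π (codedSeq lam E Z tag) a ⊆ a ∪ k a' :=
    (fSeq_codedSeq_subset (fun β hβ => (hZ β hβ).1.1) htag a).trans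
      (union_subset_union_right a fun β hβ => hZk β hβ.1 a' ha' hβ.2)
  calc _ ≤ #(a ∪ k a' : Set Ordinal) := mk_le_mk_of_subset hsub
    _ ≤ #a + #(k a') := mk_union_le _ _
    _ < lift.{1} κ := add_lt_of_lt (aleph0_le_lift.2 hκ) ha.2 (hk a' ha')

lemma exists_cone_of_idealIso {κ lam π : Cardinal.{0}} (hκ : ℵ₀ ≤ κ) {X : Set (Set Ordinal)}
    (hiso : IdealIso (Pk κ lam) (Icof κ lam) (Pk κ π) (restrictOn (Pk κ π) (Icof κ π) X)) :
    ∃ k : Set Ordinal → Set Ordinal, (∀ a ∈ Pk κ lam, #(k a) < lift.{1} κ) ∧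
      ∀ β < π.ord, ∃ z ∈ Pk κ lam, ∀ a ∈ Pk κ lam, z ⊆ a → β ∈ k a := by
  classical
  obtain ⟨W₁, -, W₂, hW₂, k, hk, hkD⟩ := hiso
  obtain ⟨hW₂Pk, c, hc, hcW₂⟩ := mem_dualOn_restrictOn_Icof_iff.1 hW₂
  refine ⟨fun a => if a ∈ W₁ then k a else ∅, fun a _ => ?_, fun β hβ => ?_⟩
  · dsimp only
    split_ifs with ha
    · exact (hW₂Pk (hk.1 ha)).2
    · simpa [pos_iff_ne_zero] using (aleph0_pos.trans_le hκ).ne'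
  have hlarge : k '' {a ∈ W₁ | β ∈ k a} ∈ dualOn (Pk κ π) (restrictOn (Pk κ π) (Icof κ π) X) := by
    refine mem_dualOn_restrictOn_Icof_iff.2
      ⟨image_subset_iff.2 fun a ha => hW₂Pk (hk.1 ha.1), insert β c, insert_mem_Pk hκ hβ hc,
        fun b hbX hb hβb => ?_⟩
    obtain ⟨a, ha, rfl⟩ := hk.2.2 (hcW₂ b hbX hb ((subset_insert β c).trans hβb))
    exact ⟨a, ⟨ha, hβb (mem_insert β c)⟩, rfl⟩
  obtain ⟨-, z, hz, hzD⟩ := mem_dualOn_Icof_iff.1 ((hkD _ (sep_subset _ _)).2 hlarge)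
  refine ⟨z, hz, fun a ha hza => ?_⟩
  obtain ⟨haW₁, hβa⟩ := hzD a ha hza
  simpa [haW₁] using hβa

end Paper

theorem statement2_general (κ lam π : Cardinal) (hreg : κ.IsRegular)
    (hkl : κ ≤ lam) (hlp : lam ≤ π) :
    A κ lam κ π ↔ ∃ X ∈ plusOn (Pk κ π) (Icof κ π),
      IdealIso (Pk κ lam) (Icof κ lam) (Pk κ π) (restrictOn (Pk κ π) (Icof κ π) X) := by
  refine ⟨exists_idealIso_of_A hreg hlp, fun ⟨X, _, hiso⟩ => ?_⟩
  obtain ⟨k, hk, hcone⟩ := exists_cone_of_idealIso hreg.aleph0_le hiso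
  exact A_of_forall_exists_cone hreg.aleph0_le hkl k hk fun β hβ => hcone β hβ.2

theorem statement2 (κ lam π : Cardinal) (hreg : κ.IsRegular) (hunc : ℵ₀ < κ)
    (hkl : κ ≤ lam) (hlp : lam ≤ π) :
    A κ lam κ π ↔ ∃ X ∈ plusOn (Pk κ π) (Icof κ π),
      IdealIso (Pk κ lam) (Icof κ lam) (Pk κ π) (restrictOn (Pk κ π) (Icof κ π) X) :=
  statement2_general κ lam π hreg hkl hlp
end

section
/- Let τ, κ, λ, π be cardinals with 2 ≤ τ, max{τ, ω} ≤ κ, κ regular, κ ≤ λ ≤ π, and let ρ ≥ λ be a cardinal with ρ ≤ π. If 𝒜_{κ,λ}(τ, π) holds, then 𝒜_{κ,ρ}(τ, π) holds. -/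
open Cardinal Set

/- Extend an `𝒜_{κ,λ}(τ,π)`-sequence `y` to an `𝒜_{κ,ρ}(τ,π)`-sequence: put `z_β = {β}` for
`β < ρ` and keep `z_β = y_β` otherwise. For `a ∈ P_κ(ρ)`, every `β ∈ f_z(a)` is either an element
of `a` (if `β < ρ`) or lies in `f_y(a ∩ λ)`, since the `y_β` are subsets of `λ`; both sets have
size `< κ`, and so does their union because `κ` is infinite. Injectivity survives because a `y_γ`
that is a singleton `{β}` forces `β < λ`, hence `y_β = {β} = y_γ`. -/

namespace Paper

def extendSeq (ρ : Cardinal.{0}) (y : Ordinal → Set Ordinal) (β : Ordinal) : Set Ordinal :=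
  if β < ρ.ord then {β} else y β

theorem extendSeq_of_lt {ρ : Cardinal.{0}} (y : Ordinal → Set Ordinal) {β : Ordinal}
    (hβ : β < ρ.ord) : extendSeq ρ y β = {β} :=
  if_pos hβ

theorem extendSeq_of_not_lt {ρ : Cardinal.{0}} (y : Ordinal → Set Ordinal) {β : Ordinal}
    (hβ : ¬β < ρ.ord) : extendSeq ρ y β = y β :=
  if_neg hβ

namespace IsTLPSeq

variable {τ lam π : Cardinal.{0}} {y : Ordinal → Set Ordinal}

theorem eq_of_eq_singleton (hy : IsTLPSeq τ lam π y) {β γ : Ordinal} (hβ : β < π.ord)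
    (hγ : γ < π.ord) (h : y γ = {β}) : β = γ := by
  have hβlam : β < lam.ord := (hy.1 γ hγ).1 β (h ▸ rfl)
  exact hy.2.2 β hβ γ hγ ((hy.2.1 β hβlam).trans h.symm)

theorem extend {ρ : Cardinal.{0}} (hτ : 2 ≤ τ) (hlr : lam ≤ ρ) (hy : IsTLPSeq τ lam π y) :
    IsTLPSeq τ ρ π (extendSeq ρ y) := by
  refine ⟨fun β hβ => ?_, fun β hβ => extendSeq_of_lt y hβ, fun β hβ γ hγ heq => ?_⟩
  · by_cases hβρ : β < ρ.ord
    · rw [extendSeq_of_lt y hβρ]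
      exact ⟨fun x hx => hx ▸ hβρ, by simpa using Cardinal.one_lt_two.trans_le hτ⟩
    · rw [extendSeq_of_not_lt y hβρ]
      exact ⟨fun x hx => ((hy.1 β hβ).1 x hx).trans_le (Cardinal.ord_le_ord.mpr hlr),
        (hy.1 β hβ).2⟩
  · by_cases hβρ : β < ρ.ord <;> by_cases hγρ : γ < ρ.ord
    · simpa [extendSeq_of_lt y hβρ, extendSeq_of_lt y hγρ] using heq
    · rw [extendSeq_of_lt y hβρ, extendSeq_of_not_lt y hγρ] at heq
      exact hy.eq_of_eq_singleton hβ hγ heq.symm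
    · rw [extendSeq_of_not_lt y hβρ, extendSeq_of_lt y hγρ] at heq
      exact (hy.eq_of_eq_singleton hγ hβ heq).symm
    · rw [extendSeq_of_not_lt y hβρ, extendSeq_of_not_lt y hγρ] at heq
      exact hy.2.2 β hβ γ hγ heq

theorem fSeq_extendSeq_subset (hy : IsTLPSeq τ lam π y) (ρ : Cardinal.{0}) (a : Set Ordinal) :
    fSeq π (extendSeq ρ y) a ⊆ a ∪ fSeq π y (a ∩ Iio lam.ord) := by
  rintro β ⟨hβ, hβa⟩
  by_cases hβρ : β < ρ.ord
  · rw [extendSeq_of_lt y hβρ, singleton_subset_iff] at hβa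
    exact Or.inl hβa
  · rw [extendSeq_of_not_lt y hβρ] at hβa
    exact Or.inr ⟨hβ, fun x hx => ⟨hβa hx, (hy.1 β hβ).1 x hx⟩⟩

end IsTLPSeq

theorem inter_Iio_mem_Pk {κ ρ : Cardinal.{0}} {a : Set Ordinal} (ha : a ∈ Pk κ ρ)
    (lam : Cardinal.{0}) : a ∩ Iio lam.ord ∈ Pk κ lam :=
  ⟨fun _ hx => hx.2, (Cardinal.mk_le_mk_of_subset inter_subset_left).trans_lt ha.2⟩

theorem ASeq.extend {κ lam τ π ρ : Cardinal.{0}} {y : Ordinal → Set Ordinal} (hτ : 2 ≤ τ)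
    (hωκ : ℵ₀ ≤ κ) (hlr : lam ≤ ρ) (hy : ASeq κ lam τ π y) :
    ASeq κ ρ τ π (extendSeq ρ y) := by
  refine ⟨hy.1.extend hτ hlr, fun a ha => ?_⟩
  have hκ : ℵ₀ ≤ Cardinal.lift.{1} κ := Cardinal.aleph0_le_lift.mpr hωκ
  calc #(fSeq π (extendSeq ρ y) a)
      ≤ #(a ∪ fSeq π y (a ∩ Iio lam.ord) : Set Ordinal) :=
        Cardinal.mk_le_mk_of_subset (hy.1.fSeq_extendSeq_subset ρ a)
    _ ≤ #a + #(fSeq π y (a ∩ Iio lam.ord)) := Cardinal.mk_union_le _ _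
    _ < Cardinal.lift.{1} κ := Cardinal.add_lt_of_lt hκ ha.2 (hy.2 _ (inter_Iio_mem_Pk ha lam))

end Paper

open Paper

theorem statement3_general (τ κ lam ρ π : Cardinal) (hτ : 2 ≤ τ)
    (hωκ : ℵ₀ ≤ κ) (hlr : lam ≤ ρ) (h : A κ lam τ π) :
    A κ ρ τ π :=
  let ⟨y, hy⟩ := h
  ⟨extendSeq ρ y, hy.extend hτ hωκ hlr⟩

theorem statement3 (τ κ lam ρ π : Cardinal) (hτ : 2 ≤ τ) (hτκ : τ ≤ κ)
    (hωκ : ℵ₀ ≤ κ) (hreg : κ.IsRegular) (hkl : κ ≤ lam) (hlp : lam ≤ π)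
    (hlr : lam ≤ ρ) (hrp : ρ ≤ π) (h : A κ lam τ π) :
    A κ ρ τ π :=
  statement3_general τ κ lam ρ π hτ hωκ hlr h
end

section
/- Let σ < κ ≤ λ be infinite cardinals with κ regular, let I be an ideal on σ, and let π be a singular cardinal greater than λ with the property that for every cardinal τ with λ ≤ τ < π there exists an ℱ^I_{κ,λ}(σ⁺, τ)-sequence. Then there exists an ℱ^I_{κ,λ}(σ⁺, π)-sequence. -/
open Cardinal Set

/-!
As `π` is singular, `[λ, π)` is covered by fewer than `π` blocks, each contained in some
`τ_c < π`, and the blocks can be coded by ordinals `c ∈ [λ, θ)` with `θ < π`. Take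
ℱ-sequences `f^c` of length `τ_c` and one `f^θ` of length `θ`, and for `β` in block `c` let
`f_β(i)` be the pair `⟨f^c_β(i), f^θ_c(i)⟩` under a pairing of `λ`. The second coordinates of
`y_β = ran f_β` recover the block, then the first ones recover `β`. Given `e` of size `κ`,
regularity of `κ` yields `κ` elements of `e` in one block, where freeness of that `f^c` works
on the first coordinate, or `κ` elements in distinct blocks, where freeness of `f^θ` works on
the second.
-/

universe u

theorem exists_subset_eq_const_or_injOn {α β : Type u} {κ : Cardinal.{u}} (hκ : κ.IsRegular)
    {e : Set α} (he : #e = κ) (B : α → β) :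
    ∃ e' ⊆ e, #e' = κ ∧ ((∃ c, ∀ x ∈ e', B x = c) ∨ InjOn B e') := by
  obtain ⟨s, hse, hBs⟩ := exists_subset_bijOn e B
  rcases le_or_gt κ #s with hs | hs
  · obtain ⟨e', he's, he'⟩ := le_mk_iff_exists_subset.1 hs
    exact ⟨e', he's.trans hse, he', Or.inr (hBs.injOn.mono he's)⟩
  · have himage : #(B '' e) < κ.ord.cof := by
      rwa [hκ.cof_ord, ← hBs.image_eq, mk_image_eq_of_injOn B s hBs.injOn]
    obtain ⟨c, t, hte, ht, htc⟩ := infinite_pigeonhole_set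
      (fun x : e => (⟨B x, mem_image_of_mem B x.2⟩ : B '' e)) κ he.ge hκ.aleph0_le himage
    obtain ⟨e', he't, he'⟩ := le_mk_iff_exists_subset.1 ht
    exact ⟨e', he't.trans hte, he', Or.inl ⟨c, fun x hx => congrArg Subtype.val (htc (he't hx))⟩⟩

theorem Cardinal.exists_pairing_Iio_ord {lam : Cardinal.{0}} (hlam : ℵ₀ ≤ lam) :
    ∃ p : Ordinal × Ordinal → Ordinal, MapsTo p (Iio lam.ord ×ˢ Iio lam.ord) (Iio lam.ord) ∧
      InjOn p (Iio lam.ord ×ˢ Iio lam.ord) := by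
  have hcard : #(Iio lam.ord ×ˢ Iio lam.ord) ≤ #(Iio lam.ord) := by
    rw [mk_setProd, mk_Iio_ordinal, card_ord, ← lift_mul, mul_eq_self hlam]
  obtain ⟨emb⟩ := hcard
  classical
  refine ⟨fun x => if hx : x ∈ Iio lam.ord ×ˢ Iio lam.ord then emb ⟨x, hx⟩ else 0,
    fun x hx => ?_, fun x hx y hy hxy => ?_⟩
  · simpa only [dif_pos hx] using (emb ⟨x, hx⟩).2
  · simp only [dif_pos hx, dif_pos hy] at hxy
    exact congrArg Subtype.val (emb.injective (Subtype.ext hxy))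

theorem Cardinal.IsSingular.exists_blocks {lam π : Cardinal.{0}} (hπ : π.IsSingular)
    (hlam : ℵ₀ ≤ lam) (hlp : lam < π) :
    ∃ θ, lam ≤ θ ∧ θ < π ∧ ∃ (τ : Ordinal → Cardinal.{0}) (blk : Ordinal → Ordinal),
      (∀ c, lam ≤ τ c ∧ τ c < π) ∧
      ∀ β < π.ord, blk β ∈ Ico lam.ord θ.ord ∧ β < (τ (blk β)).ord := by
  set δ := π.ord.cof.ord
  obtain ⟨F, hF⟩ := Ordinal.exists_isFundamentalSeq (o := π.ord) (a := δ) rfl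
  set θ := Order.succ (max lam π.ord.cof)
  have hlθ : lam < θ := (le_max_left _ _).trans_lt (Order.lt_succ _)
  have hcode : ∀ ι < δ, lam.ord + ι ∈ Ico lam.ord θ.ord := fun ι hι =>
    ⟨le_self_add, lt_ord.2 <| by
      rw [Ordinal.card_add, card_ord]
      exact add_lt_of_lt (hlam.trans hlθ.le) hlθ
        ((lt_ord.1 hι).trans_le ((le_max_right _ _).trans (Order.le_succ _)))⟩
  classical
  -- block `λ + ι` ends at the `ι`-th term of a fundamental sequence of `π`; codes start at `λ`
  -- because an ℱ-sequence of length `θ` only has functions `f_c` for `λ ≤ c`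
  let top : Ordinal → Ordinal := fun c =>
    if hc : c - lam.ord < δ then F ⟨c - lam.ord, hc⟩ else 0
  have htop : ∀ c, top c < π.ord := fun c => by
    by_cases hc : c - lam.ord < δ
    · simp only [top, dif_pos hc]
      exact (F _).2
    · simpa [top, hc] using hπ.pos
  have hcof : ∀ β < π.ord, ∃ ι < δ, β ≤ top (lam.ord + ι) := fun β hβ => by
    obtain ⟨_, ⟨ι, rfl⟩, hle⟩ := hF.isCofinal_range ⟨β, hβ⟩
    have hι : lam.ord + ι - lam.ord < δ := by rw [Ordinal.add_sub_cancel]; exact ι.2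
    refine ⟨ι, ι.2, ?_⟩
    simp only [top, dif_pos hι, Ordinal.add_sub_cancel]
    exact hle
  choose! idx hidx using hcof
  refine ⟨θ, hlθ.le, hπ.isSuccLimit.succ_lt (max_lt hlp hπ.cof_ord_lt),
    fun c => Order.succ (max lam (top c).card), fun β => lam.ord + idx β,
    fun c => ⟨(le_max_left _ _).trans (Order.le_succ _), hπ.isSuccLimit.succ_lt
      (max_lt hlp (lt_ord.1 (htop c)))⟩,
    fun β hβ => ⟨hcode _ (hidx β hβ).1, (hidx β hβ).2.trans_lt (lt_ord.2 ?_)⟩⟩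
  exact (le_max_right _ _).trans_lt (Order.lt_succ _)

namespace Paper

/-- The freeness clause of `FSeq`, on an arbitrary set `D` of indices. -/
def IsFreeOn (κ σ : Cardinal.{0}) (I : Set (Set Ordinal)) (f : Ordinal → Ordinal → Ordinal)
    (D : Set Ordinal) : Prop :=
  ∀ e ⊆ D, #e = lift.{1} κ → ∃ b ⊆ e, #b = lift.{1} κ ∧ ∃ g : Ordinal → Set Ordinal,
    (∀ α ∈ b, g α ∈ I) ∧
    ∀ α ∈ b, ∀ β ∈ b, α < β → ∀ i < σ.ord, i ∉ g α → i ∉ g β → f α i ≠ f β i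

namespace IsFreeOn

variable {κ σ : Cardinal.{0}} {I : Set (Set Ordinal)} {f f' : Ordinal → Ordinal → Ordinal}
  {D D' : Set Ordinal}

theorem of_forall_exists_subset
    (h : ∀ e ⊆ D, #e = lift.{1} κ → ∃ e' ⊆ e, #e' = lift.{1} κ ∧ IsFreeOn κ σ I f e') :
    IsFreeOn κ σ I f D := by
  intro e heD he
  obtain ⟨e', he'e, he', hfree⟩ := h e heD he
  obtain ⟨b, hbe', hb, hg⟩ := hfree e' subset_rfl he'
  exact ⟨b, hbe'.trans he'e, hb, hg⟩

theorem comap (hf : IsFreeOn κ σ I f D') {c : Ordinal → Ordinal} (hc : InjOn c D)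
    (hcD : MapsTo c D D')
    (hsep : ∀ α ∈ D, ∀ β ∈ D, ∀ i < σ.ord, f (c α) i ≠ f (c β) i → f' α i ≠ f' β i) :
    IsFreeOn κ σ I f' D := by
  intro e heD he
  have hce : #(c '' e) = lift.{1} κ := by rw [mk_image_eq_of_injOn c e (hc.mono heD), he]
  obtain ⟨b', hb'e, hb', g, hgI, hg⟩ := hf (c '' e) ((hcD.mono_left heD).image_subset) hce
  have hcb : c '' (e ∩ c ⁻¹' b') = b' := by rw [image_inter_preimage, inter_eq_right.2 hb'e]
  refine ⟨e ∩ c ⁻¹' b', inter_subset_left, ?_, fun α => g (c α), fun α hα => hgI _ hα.2, ?_⟩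
  · rw [← mk_image_eq_of_injOn c _ (hc.mono (inter_subset_left.trans heD)), hcb, hb']
  intro α hα β hβ hαβ i hi hgα hgβ
  refine hsep α (heD hα.1) β (heD hβ.1) i hi ?_
  rcases lt_or_gt_of_ne (hc.ne (heD hα.1) (heD hβ.1) hαβ.ne) with hlt | hlt
  · exact hg _ hα.2 _ hβ.2 hlt i hi hgα hgβ
  · exact (hg _ hβ.2 _ hα.2 hlt i hi hgβ hgα).symm

end IsFreeOn

def seqOf (lam σ : Cardinal.{0}) (f : Ordinal → Ordinal → Ordinal) (β : Ordinal) :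
    Set Ordinal :=
  if β < lam.ord then {β} else f β '' Iio σ.ord

/-- The functions `f_β` of an ℱ-sequence, which determine the sequence as `seqOf lam σ f`. -/
structure IsFSeqFun (κ lam π σ : Cardinal.{0}) (I : Set (Set Ordinal))
    (f : Ordinal → Ordinal → Ordinal) : Prop where
  mapsTo : ∀ β ∈ Ico lam.ord π.ord, MapsTo (f β) (Iio σ.ord) (Iio lam.ord)
  injOn : InjOn (seqOf lam σ f) (Iio π.ord)
  isFreeOn : IsFreeOn κ σ I f (Ico lam.ord π.ord)

variable {κ lam π σ : Cardinal.{0}} {I : Set (Set Ordinal)}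

theorem FSeq.exists_isFSeqFun {y : Ordinal → Set Ordinal} (h : FSeq κ lam π σ I y) :
    ∃ f, IsFSeqFun κ lam π σ I f := by
  obtain ⟨⟨-, hsingleton, hinj⟩, f, hf, hfree⟩ := h
  have hy : EqOn y (seqOf lam σ f) (Iio π.ord) := fun β hβ => by
    unfold seqOf
    split_ifs with hβlam
    · exact hsingleton β hβlam
    · exact (hf β (not_lt.1 hβlam) hβ).2
  exact ⟨f, fun β hβ i hi => (hf β hβ.1 hβ.2).1 i hi,
    InjOn.congr (fun β hβ γ hγ => hinj β hβ γ hγ) hy, hfree⟩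

theorem IsFSeqFun.fSeq (hσ : σ ≠ 0) {f : Ordinal → Ordinal → Ordinal}
    (hf : IsFSeqFun κ lam π σ I f) : FSeq κ lam π σ I (seqOf lam σ f) := by
  refine ⟨⟨fun β hβ => ?_, fun β hβ => if_pos hβ, fun β hβ γ hγ => hf.injOn hβ hγ⟩,
    f, fun β hlamβ hβ => ⟨fun i hi => hf.mapsTo β ⟨hlamβ, hβ⟩ hi, if_neg (not_lt.2 hlamβ)⟩,
    hf.isFreeOn⟩
  unfold seqOf
  split_ifs with hβlam
  · refine ⟨fun x hx => hx ▸ hβlam, ?_⟩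
    rw [mk_singleton, one_lt_lift_iff]
    exact (Cardinal.one_le_iff_ne_zero.2 hσ).trans_lt (Order.lt_succ σ)
  · refine ⟨(hf.mapsTo β ⟨not_lt.1 hβlam, hβ⟩).image_subset, ?_⟩
    calc #(f β '' Iio σ.ord) ≤ #(Iio σ.ord) := mk_image_le
      _ = lift.{1} σ := by rw [mk_Iio_ordinal, card_ord]
      _ < lift.{1} (Order.succ σ) := lift_lt.2 (Order.lt_succ σ)

section Glue

variable {κ lam σ θ π : Cardinal.{0}} {I : Set (Set Ordinal)} {τ : Ordinal → Cardinal.{0}}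
  {blk : Ordinal → Ordinal} {p : Ordinal × Ordinal → Ordinal}
  {fz : Ordinal → Ordinal → Ordinal → Ordinal} {fw : Ordinal → Ordinal → Ordinal}

def gluedPair (blk : Ordinal → Ordinal) (fz : Ordinal → Ordinal → Ordinal → Ordinal)
    (fw : Ordinal → Ordinal → Ordinal) (β i : Ordinal) : Ordinal × Ordinal :=
  (fz (blk β) β i, fw (blk β) i)

theorem seqOf_comp_gluedPair {β : Ordinal} (hβ : lam.ord ≤ β) :
    seqOf lam σ (fun β i => p (gluedPair blk fz fw β i)) β =
      p '' (gluedPair blk fz fw β '' Iio σ.ord) := by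
  rw [seqOf, if_neg (not_lt.2 hβ), image_image]

theorem image_fst_image_gluedPair {β : Ordinal} (hβ : lam.ord ≤ β) :
    Prod.fst '' (gluedPair blk fz fw β '' Iio σ.ord) = seqOf lam σ (fz (blk β)) β := by
  rw [seqOf, if_neg (not_lt.2 hβ), image_image]
  rfl

theorem image_snd_image_gluedPair {β : Ordinal} (hβ : lam.ord ≤ blk β) :
    Prod.snd '' (gluedPair blk fz fw β '' Iio σ.ord) = seqOf lam σ fw (blk β) := by
  rw [seqOf, if_neg (not_lt.2 hβ), image_image]
  rfl

variable (hblk : ∀ β ∈ Ico lam.ord π.ord, blk β ∈ Ico lam.ord θ.ord ∧ β < (τ (blk β)).ord)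
  (hz : ∀ c, IsFSeqFun κ lam (τ c) σ I (fz c)) (hw : IsFSeqFun κ lam θ σ I fw)
include hblk hz hw

theorem mapsTo_gluedPair {β : Ordinal} (hβ : β ∈ Ico lam.ord π.ord) :
    MapsTo (gluedPair blk fz fw β) (Iio σ.ord) (Iio lam.ord ×ˢ Iio lam.ord) := fun _ hi =>
  ⟨(hz _).mapsTo β ⟨hβ.1, (hblk β hβ).2⟩ hi, hw.mapsTo _ (hblk β hβ).1 hi⟩

theorem seqOf_glued_ne_singleton (hσ : σ ≠ 0) (hp : InjOn p (Iio lam.ord ×ˢ Iio lam.ord))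
    {β : Ordinal} (hβ : β ∈ Ico lam.ord π.ord) (γ : Ordinal) :
    seqOf lam σ (fun β i => p (gluedPair blk fz fw β i)) β ≠ {γ} := by
  intro hβγ
  have hA := (mapsTo_gluedPair hblk hz hw hβ).image_subset
  rw [seqOf_comp_gluedPair hβ.1] at hβγ
  have hσord : (Iio σ.ord).Nonempty := ⟨0, ord_pos.2 (pos_iff_ne_zero.2 hσ)⟩
  obtain ⟨q, hq⟩ := hσord.image (gluedPair blk fz fw β)
  have hpq : p q = γ := by
    rw [← mem_singleton_iff, ← hβγ]
    exact mem_image_of_mem p hq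
  have hAq : gluedPair blk fz fw β '' Iio σ.ord = {q} := by
    rw [← hp.image_eq_image_iff hA (singleton_subset_iff.2 (hA hq)), hβγ, image_singleton, hpq]
  have hq₁ : q.1 < lam.ord := (hA hq).1
  have hβq : seqOf lam σ (fz (blk β)) β = seqOf lam σ (fz (blk β)) q.1 := by
    rw [← image_fst_image_gluedPair hβ.1, hAq, image_singleton, seqOf, if_pos hq₁]
  have := (hz (blk β)).injOn (hblk β hβ).2 ((hq₁.trans_le hβ.1).trans (hblk β hβ).2) hβq
  exact (this ▸ hβ.1).not_gt hq₁

theorem injOn_seqOf_glued (hσ : σ ≠ 0) (hp : InjOn p (Iio lam.ord ×ˢ Iio lam.ord)) :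
    InjOn (seqOf lam σ fun β i => p (gluedPair blk fz fw β i)) (Iio π.ord) := by
  intro β hβ γ hγ hβγ
  rcases lt_or_ge β lam.ord with hβlam | hβlam <;> rcases lt_or_ge γ lam.ord with hγlam | hγlam
  · simpa [seqOf, hβlam, hγlam] using hβγ
  · exact absurd (hβγ.symm.trans (if_pos hβlam))
      (seqOf_glued_ne_singleton hblk hz hw hσ hp ⟨hγlam, hγ⟩ β)
  · exact absurd (hβγ.trans (if_pos hγlam))
      (seqOf_glued_ne_singleton hblk hz hw hσ hp ⟨hβlam, hβ⟩ γ)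
  have hβ' : β ∈ Ico lam.ord π.ord := ⟨hβlam, hβ⟩
  have hγ' : γ ∈ Ico lam.ord π.ord := ⟨hγlam, hγ⟩
  rw [seqOf_comp_gluedPair hβlam, seqOf_comp_gluedPair hγlam,
    hp.image_eq_image_iff (mapsTo_gluedPair hblk hz hw hβ').image_subset
      (mapsTo_gluedPair hblk hz hw hγ').image_subset] at hβγ
  have hblkeq : blk β = blk γ := hw.injOn (hblk β hβ').1.2 (hblk γ hγ').1.2 <| by
    rw [← image_snd_image_gluedPair (hblk β hβ').1.1,
      ← image_snd_image_gluedPair (hblk γ hγ').1.1, hβγ]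
  refine (hz (blk β)).injOn (hblk β hβ').2 (hblkeq ▸ (hblk γ hγ').2) ?_
  rw [← image_fst_image_gluedPair hβlam, hβγ, image_fst_image_gluedPair hγlam, hblkeq]

theorem isFreeOn_glued (hκ : κ.IsRegular) (hp : InjOn p (Iio lam.ord ×ˢ Iio lam.ord)) :
    IsFreeOn κ σ I (fun β i => p (gluedPair blk fz fw β i)) (Ico lam.ord π.ord) := by
  have hpair : ∀ α ∈ Ico lam.ord π.ord, ∀ β ∈ Ico lam.ord π.ord, ∀ i < σ.ord,
      p (gluedPair blk fz fw α i) = p (gluedPair blk fz fw β i) →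
        gluedPair blk fz fw α i = gluedPair blk fz fw β i := fun α hα β hβ i hi =>
    @hp _ (mapsTo_gluedPair hblk hz hw hα hi) _ (mapsTo_gluedPair hblk hz hw hβ hi)
  refine IsFreeOn.of_forall_exists_subset fun e he hecard => ?_
  obtain ⟨e', he'e, he', ⟨c, hc⟩ | hinj⟩ := exists_subset_eq_const_or_injOn hκ.lift hecard blk
  · refine ⟨e', he'e, he', (hz c).isFreeOn.comap (injOn_id e')
      (fun β hβ => ⟨(he (he'e hβ)).1, hc β hβ ▸ (hblk β (he (he'e hβ))).2⟩) ?_⟩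
    intro α hα β hβ i hi hne heq
    have := congrArg Prod.fst (hpair α (he (he'e hα)) β (he (he'e hβ)) i hi heq)
    exact hne (by simpa only [gluedPair, hc α hα, hc β hβ, id] using this)
  · refine ⟨e', he'e, he', hw.isFreeOn.comap hinj (fun β hβ => (hblk β (he (he'e hβ))).1) ?_⟩
    intro α hα β hβ i hi hne heq
    exact hne (congrArg Prod.snd (hpair α (he (he'e hα)) β (he (he'e hβ)) i hi heq))

theorem isFSeqFun_glued (hκ : κ.IsRegular) (hσ : σ ≠ 0)
    (hpmaps : MapsTo p (Iio lam.ord ×ˢ Iio lam.ord) (Iio lam.ord))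
    (hp : InjOn p (Iio lam.ord ×ˢ Iio lam.ord)) :
    IsFSeqFun κ lam π σ I fun β i => p (gluedPair blk fz fw β i) where
  mapsTo _ hβ _ hi := hpmaps (mapsTo_gluedPair hblk hz hw hβ hi)
  injOn := injOn_seqOf_glued hblk hz hw hσ hp
  isFreeOn := isFreeOn_glued hblk hz hw hκ hp

end Glue

theorem exists_fSeq_of_blocks {κ lam σ θ π : Cardinal.{0}} {I : Set (Set Ordinal)}
    {τ : Ordinal → Cardinal.{0}} {blk : Ordinal → Ordinal} (hκ : κ.IsRegular)
    (hlam : ℵ₀ ≤ lam) (hσ : σ ≠ 0)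
    (hblk : ∀ β ∈ Ico lam.ord π.ord, blk β ∈ Ico lam.ord θ.ord ∧ β < (τ (blk β)).ord)
    (hτ : ∀ c, ∃ y, FSeq κ lam (τ c) σ I y) (hθ : ∃ y, FSeq κ lam θ σ I y) :
    ∃ y, FSeq κ lam π σ I y := by
  choose fz hfz using fun c => (hτ c).elim fun _ hy => hy.exists_isFSeqFun
  obtain ⟨fw, hfw⟩ := hθ.elim fun _ hy => hy.exists_isFSeqFun
  obtain ⟨p, hpmaps, hp⟩ := exists_pairing_Iio_ord hlam
  exact ⟨_, (isFSeqFun_glued hblk hfz hfw hκ hσ hpmaps hp).fSeq hσ⟩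

end Paper

open Paper

theorem statement15_general (σ κ lam π : Cardinal) (hσ : ℵ₀ ≤ σ)
    (hκreg : κ.IsRegular) (hkl : κ ≤ lam)
    (I : Set (Set Ordinal))
    (hπ : Paper.IsSingular π) (hlp : lam < π)
    (h : ∀ τ : Cardinal, lam ≤ τ → τ < π → ∃ y, FSeq κ lam τ σ I y) :
    ∃ y, FSeq κ lam π σ I y := by
  have hlam : ℵ₀ ≤ lam := hκreg.aleph0_le.trans hkl
  obtain ⟨θ, hlθ, hθπ, τ, blk, hτ, hblk⟩ :=
    Cardinal.IsSingular.exists_blocks ⟨hπ.1, hπ.2.ne⟩ hlam hlp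
  exact exists_fSeq_of_blocks hκreg hlam (aleph0_pos.trans_le hσ).ne' (fun β hβ => hblk β hβ.2)
    (fun c => h (τ c) (hτ c).1 (hτ c).2) (h θ hlθ hθπ)

theorem statement15 (σ κ lam π : Cardinal) (hσ : ℵ₀ ≤ σ) (hsk : σ < κ)
    (hκreg : κ.IsRegular) (hkl : κ ≤ lam)
    (I : Set (Set Ordinal)) (hI : IsIdealOn (Set.Iio σ.ord) I)
    (hπ : Paper.IsSingular π) (hlp : lam < π)
    (h : ∀ τ : Cardinal, lam ≤ τ → τ < π → ∃ y, FSeq κ lam τ σ I y) :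
    ∃ y, FSeq κ lam π σ I y :=
  statement15_general σ κ lam π hσ hκreg hkl I hπ hlp h
end

section
/- Let ρ < κ ≤ λ ≤ σ ≤ π be five infinite cardinals with κ regular, and let I be an ideal on ρ. If there exists an ℱ^I_{κ,λ}(ρ⁺, π)-sequence, then there exists an ℱ^I_{κ,σ}(ρ⁺, π)-sequence. -/
open Cardinal Set

namespace Paper

def padSingletons (σ : Cardinal.{0}) (y : Ordinal → Set Ordinal) (β : Ordinal) :
    Set Ordinal :=
  if β < σ.ord then {β} else y β

lemma padSingletons_of_lt {σ : Cardinal.{0}} {y : Ordinal → Set Ordinal} {β : Ordinal}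
    (hβ : β < σ.ord) : padSingletons σ y β = {β} :=
  if_pos hβ

lemma padSingletons_of_le {σ : Cardinal.{0}} {y : Ordinal → Set Ordinal} {β : Ordinal}
    (hβ : σ.ord ≤ β) : padSingletons σ y β = y β :=
  if_neg hβ.not_gt

namespace IsTLPSeq

variable {τ lam σ π : Cardinal.{0}} {y : Ordinal → Set Ordinal}

lemma ne_singleton (hy : IsTLPSeq τ lam π y) {β γ : Ordinal} (hβ : β < π.ord)
    (hlγ : lam.ord ≤ γ) (hγ : γ < π.ord) : y γ ≠ {β} := by
  intro hγβ
  by_cases hβl : β < lam.ord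
  · have : γ = β := hy.2.2 γ hγ β hβ (by rw [hγβ, hy.2.1 β hβl])
    exact (hβl.trans_le hlγ).ne' this
  · exact hβl ((hy.1 γ hγ).1 β (hγβ ▸ rfl))

lemma padSingletons (hy : IsTLPSeq τ lam π y) (hτ : 1 < τ) (hls : lam ≤ σ) :
    IsTLPSeq τ σ π (padSingletons σ y) := by
  have hlso : lam.ord ≤ σ.ord := ord_le_ord.mpr hls
  refine ⟨fun β hβ => ?_, fun β hβ => padSingletons_of_lt hβ, fun β hβ γ hγ hβγ => ?_⟩
  · rcases lt_or_ge β σ.ord with hβσ | hσβ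
    · rw [padSingletons_of_lt hβσ, mk_singleton, ← lift_one.{0, 1}, lift_lt]
      exact ⟨fun x hx => hx ▸ hβσ, hτ⟩
    · rw [padSingletons_of_le hσβ]
      exact ⟨fun x hx => ((hy.1 β hβ).1 x hx).trans_le hlso, (hy.1 β hβ).2⟩
  · rcases lt_or_ge β σ.ord with hβσ | hσβ <;> rcases lt_or_ge γ σ.ord with hγσ | hσγ
    · rw [padSingletons_of_lt hβσ, padSingletons_of_lt hγσ] at hβγ
      exact singleton_injective hβγ
    · rw [padSingletons_of_lt hβσ, padSingletons_of_le hσγ] at hβγ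
      exact absurd hβγ.symm (hy.ne_singleton hβ (hlso.trans hσγ) hγ)
    · rw [padSingletons_of_le hσβ, padSingletons_of_lt hγσ] at hβγ
      exact absurd hβγ (hy.ne_singleton hγ (hlso.trans hσβ) hβ)
    · rw [padSingletons_of_le hσβ, padSingletons_of_le hσγ] at hβγ
      exact hy.2.2 β hβ γ hγ hβγ

end IsTLPSeq

/-- Raising `λ` to `σ` only shrinks the set `π \ λ` of indices the `ℱ`-condition speaks about,
so it suffices to turn the terms below `σ` into singletons. -/
lemma FSeq.padSingletons {κ lam σ π ρ : Cardinal.{0}} {I : Set (Set Ordinal)}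
    {y : Ordinal → Set Ordinal} (hy : FSeq κ lam π ρ I y) (hρ : ρ ≠ 0) (hls : lam ≤ σ) :
    FSeq κ σ π ρ I (padSingletons σ y) := by
  obtain ⟨hseq, f, hf, he⟩ := hy
  have hlso : lam.ord ≤ σ.ord := ord_le_ord.mpr hls
  refine ⟨hseq.padSingletons (Order.lt_succ_iff.2 (Cardinal.one_le_iff_ne_zero.2 hρ)) hls, f,
    fun β hσβ hβ => ?_, fun e hsub hcard => he e (fun β hβ => ?_) hcard⟩
  · obtain ⟨hfl, hyf⟩ := hf β (hlso.trans hσβ) hβ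
    exact ⟨fun i hi => (hfl i hi).trans_le hlso, (padSingletons_of_le hσβ).trans hyf⟩
  · exact ⟨hlso.trans (hsub hβ).1, (hsub hβ).2⟩

end Paper

open Paper

theorem statement18_general (ρ κ lam σ π : Cardinal) (hρ : ℵ₀ ≤ ρ)
    (hls : lam ≤ σ)
    (I : Set (Set Ordinal))
    (h : ∃ y, FSeq κ lam π ρ I y) :
    ∃ y, FSeq κ σ π ρ I y :=
  h.elim fun _ hy => ⟨_, hy.padSingletons (aleph0_pos.trans_le hρ).ne' hls⟩

theorem statement18 (ρ κ lam σ π : Cardinal) (hρ : ℵ₀ ≤ ρ) (hrk : ρ < κ)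
    (hκreg : κ.IsRegular) (hkl : κ ≤ lam) (hls : lam ≤ σ) (hsp : σ ≤ π)
    (I : Set (Set Ordinal)) (hI : IsIdealOn (Set.Iio ρ.ord) I)
    (h : ∃ y, FSeq κ lam π ρ I y) :
    ∃ y, FSeq κ σ π ρ I y :=
  statement18_general ρ κ lam σ π hρ hls I h
end
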